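/- There exist k₀ ∈ ℕ and a real number r with 0 < r < 2 such that for every integer k ≥ k₀, every α ∈ ℂ with |α| < 1/2, and every z ∈ ℂ with |z| ≤ 2, one has α·(1 + (α−1)z/(8k))^k − 1 ≠ 0 and |T_{α,k}(z)| < r. In other words, for all large k the rational maps T_{α,k} map the closed disk of radius 2 compactly into the open disk of radius 2, uniformly in α ∈ 𝔻(0, 1/2). -/

import Mathlib

/-- The rational approximants `T_{α,k}(z) = (P − 1)/(αP − 1)` with
`P = (1 + (α−1)z/(8k))^k`, with the division-by-zero convention. -/
noncomputable def Tk (α : ℂ) (k : ℕ) (z : ℂ) : ℂ :=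
  ((1 + (α - 1) * z / (8 * (k : ℂ))) ^ k - 1) /
    (α * (1 + (α - 1) * z / (8 * (k : ℂ))) ^ k - 1)

lemma abs_one_add_pow_sub_one (w : ℂ) (k : ℕ) :
    ‖(1 + w) ^ k - 1‖ ≤ (1 + ‖w‖) ^ k - 1 := by
  induction k with
  | zero => simp
  | succ k ih =>
    have key : (1 + w) ^ (k + 1) - 1 = ((1 + w) ^ k - 1) * (1 + w) + w := by ring
    rw [key]
    have h1 := norm_add_le (((1 + w) ^ k - 1) * (1 + w)) w
    rw [norm_mul] at h1
    have h2 : ‖1 + w‖ ≤ 1 + ‖w‖ := by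
      simpa using norm_add_le (1:ℂ) w
    have h3 : (0:ℝ) ≤ ‖(1 + w) ^ k - 1‖ := norm_nonneg _
    have h4 : (0:ℝ) ≤ ‖1 + w‖ := norm_nonneg _
    have h5 : (0:ℝ) ≤ ‖w‖ := norm_nonneg _
    have goal : ((1 + ‖w‖) ^ k - 1) * (1 + ‖w‖) + ‖w‖
        = (1 + ‖w‖) ^ (k + 1) - 1 := by ring
    nlinarith [mul_le_mul ih h2 h4 (by nlinarith [pow_nonneg (by linarith : (0:ℝ) ≤ 1 + ‖w‖) k] : (0:ℝ) ≤ (1 + ‖w‖) ^ k - 1)]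

lemma exp_three_eighths_lt : Real.exp (3 / 8) < 1.46 := by
  have h8 : Real.exp (3 / 8) ^ 8 = Real.exp 3 := by
    rw [← Real.exp_nat_mul]; norm_num
  have h3 : Real.exp 3 = Real.exp 1 ^ 3 := by
    rw [← Real.exp_nat_mul]; norm_num
  have he : Real.exp 1 < 2.7182818286 := Real.exp_one_lt_d9
  have hpos : (0:ℝ) < Real.exp 1 := Real.exp_pos 1
  have : Real.exp (3 / 8) ^ 8 < 1.46 ^ 8 := by
    rw [h8, h3]
    calc Real.exp 1 ^ 3 < 2.7182818286 ^ 3 := by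
          apply pow_lt_pow_left₀ he (le_of_lt hpos)
          norm_num
      _ < 1.46 ^ 8 := by norm_num
  exact lt_of_pow_lt_pow_left₀ 8 (by norm_num) this

/-- For all large `k`, uniformly in `|α| < 1/2`, the map `T_{α,k}` has no pole
on the closed disk of radius `2` and maps it compactly into the open disk of radius `2`. -/
theorem Tk_maps_disk_compactly_into_disk :
    ∃ k₀ : ℕ, ∃ r : ℝ, 0 < r ∧ r < 2 ∧
      ∀ k : ℕ, k₀ ≤ k → ∀ α : ℂ, ‖α‖ < 1 / 2 → ∀ z : ℂ, ‖z‖ ≤ 2 →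
        α * (1 + (α - 1) * z / (8 * (k : ℂ))) ^ k - 1 ≠ 0 ∧
        ‖Tk α k z‖ < r := by
  refine ⟨1, 9/5, by norm_num, by norm_num, ?_⟩
  intro k hk α hα z hz
  set w : ℂ := (α - 1) * z / (8 * (k : ℂ)) with hw
  have hk0 : (0:ℝ) < (k:ℝ) := by exact_mod_cast hk
  have hkC : (8 * (k:ℂ)) ≠ 0 := by
    simp only [Ne, mul_eq_zero]
    push_neg
    exact ⟨by norm_num, Nat.cast_ne_zero.mpr (by omega)⟩
  -- bound |w|
  have habsw : ‖w‖ ≤ 3 / (8 * (k:ℝ)) := by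
    rw [hw, norm_div, norm_mul]
    have h1 : ‖α - 1‖ ≤ 3 / 2 := by
      have := norm_sub_le α 1
      simp at this
      linarith
    have h2 : ‖8 * (k:ℂ)‖ = 8 * (k:ℝ) := by
      rw [norm_mul]
      simp [Complex.norm_natCast]
    rw [h2]
    have hnum : ‖α - 1‖ * ‖z‖ ≤ 3 := by
      nlinarith [norm_nonneg (α - 1), norm_nonneg z]
    apply div_le_div_of_nonneg_right hnum (by positivity) |>.trans_eq rfl
  -- bound (1+|w|)^k ≤ exp(3/8)
  have hpow : (1 + ‖w‖) ^ k ≤ Real.exp (3/8) := by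
    calc (1 + ‖w‖) ^ k ≤ (1 + 3 / (8 * (k:ℝ))) ^ k := by
          apply pow_le_pow_left₀ (by positivity) (by linarith)
      _ ≤ Real.exp (3 / (8 * (k:ℝ))) ^ k := by
          apply pow_le_pow_left₀ (by positivity)
          have := Real.add_one_le_exp (3 / (8 * (k:ℝ)))
          linarith
      _ = Real.exp ((3 / (8 * (k:ℝ))) * k) := by
          rw [← Real.exp_nat_mul]; ring_nf
      _ = Real.exp (3/8) := by
          congr 1
          field_simp
  have hexp := exp_three_eighths_lt
  have hnum : ‖(1 + w) ^ k - 1‖ < 0.46 := by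
    have := abs_one_add_pow_sub_one w k
    have : ‖(1 + w) ^ k - 1‖ ≤ Real.exp (3/8) - 1 := by linarith
    linarith
  have hP : ‖(1 + w) ^ k‖ ≤ 1.46 := by
    calc ‖(1 + w) ^ k‖
        = ‖(1 + w) ^ k - 1 + 1‖ := by ring_nf
      _ ≤ ‖(1 + w) ^ k - 1‖ + 1 := by
          simpa using norm_add_le ((1 + w) ^ k - 1) 1
      _ ≤ 1.46 := by linarith
  -- denominator bound
  have hden : (0.27 : ℝ) < ‖α * (1 + w) ^ k - 1‖ := by
    have htri := norm_add_le (-(α * (1 + w) ^ k - 1)) (α * (1 + w) ^ k)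
    have heq : -(α * (1 + w) ^ k - 1) + α * (1 + w) ^ k = 1 := by ring
    rw [heq, norm_neg, norm_one, norm_mul] at htri
    have hprod : ‖α‖ * ‖(1 + w) ^ k‖ < 0.73 := by
      nlinarith [norm_nonneg α, norm_nonneg ((1 + w) ^ k)]
    linarith
  have hden0 : α * (1 + w) ^ k - 1 ≠ 0 := by
    intro h
    rw [h, norm_zero] at hden
    norm_num at hden
  refine ⟨hden0, ?_⟩
  rw [Tk]
  rw [← hw, norm_div, div_lt_iff₀ (by linarith : (0:ℝ) < ‖α * (1 + w) ^ k - 1‖)]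
  nlinarith [norm_nonneg ((1 + w) ^ k - 1)]
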